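/- The function p(t) = Σ_{n=0}^∞ 4(-1)^n (n+1)²/(√(2π) t^{3/2}) · exp(-(n+1)²/(2t)) on (0,∞) has Laplace transform ∫_0^∞ e^{-st} p(t) dt = 1/cosh²(√(s/2)) for all s > 0. -/

import Mathlib

/-!
The `n`-th term of the series is `4 (-1)^n (n+1)` times the first-passage density of level
`a = n + 1`, whose Laplace transform is `exp (-a √(2s))`: the substitution `t = a² / v²`
turns it into `∫₀^∞ exp (-v²/2 - b²/(2v²)) dv` with `b = a √(2s)`, and the
Cauchy–Schlömilch substitution `u = v - b / v` turns that into half a Gaussian integral.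
The absolute values of the terms have summable integrals, so the Laplace transform may be
taken termwise; with `x = exp (-√(2s))` the result is
`4 ∑ (-1)^n (n+1) x^(n+1) = 4x / (1+x)² = 1 / cosh² √(s/2)`.
-/

open Real MeasureTheory Set

/-- The series density of the circle cover time. -/
noncomputable def coverDensity (t : ℝ) : ℝ :=
  ∑' n : ℕ, 4 * (-1) ^ n * ((n : ℝ) + 1) ^ 2 / (Real.sqrt (2 * Real.pi) * t ^ ((3 : ℝ) / 2))
    * Real.exp (-((n : ℝ) + 1) ^ 2 / (2 * t))

section Substitution

variable {E : Type*} [NormedAddCommGroup E] [NormedSpace ℝ E] {b : ℝ}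

lemma hasDerivAt_const_div_id {v : ℝ} (hv : v ≠ 0) :
    HasDerivAt (fun v : ℝ => b / v) (-(b / v ^ 2)) v :=
  ((hasDerivAt_const v b).fun_div (hasDerivAt_id v) hv).congr_deriv (by simp; ring)

lemma image_const_div_Ioi (hb : 0 < b) : (fun v : ℝ => b / v) '' Ioi 0 = Ioi 0 := by
  refine Subset.antisymm (image_subset_iff.mpr fun v hv => div_pos hb hv) fun t ht => ?_
  exact ⟨b / t, div_pos hb ht, div_div_cancel₀ hb.ne'⟩

lemma injOn_const_div_Ioi (hb : 0 < b) : InjOn (fun v : ℝ => b / v) (Ioi 0) :=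
  fun x hx y hy h => by
    rw [div_eq_div_iff (ne_of_gt hx) (ne_of_gt hy)] at h
    exact (mul_left_cancel₀ hb.ne' h).symm

theorem integral_Ioi_comp_const_div (hb : 0 < b) (f : ℝ → E) :
    ∫ v in Ioi 0, (b / v ^ 2) • f (b / v) = ∫ w in Ioi 0, f w := by
  conv_rhs => rw [← image_const_div_Ioi hb]
  rw [integral_image_eq_integral_abs_deriv_smul measurableSet_Ioi
    (fun v hv => (hasDerivAt_const_div_id (ne_of_gt hv)).hasDerivWithinAt)
    (injOn_const_div_Ioi hb)]
  refine setIntegral_congr_fun measurableSet_Ioi fun v hv => ?_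
  have : (0 : ℝ) < v := hv
  rw [abs_neg, abs_of_pos (by positivity)]

theorem integral_Ioi_comp_sq (f : ℝ → E) :
    ∫ w in Ioi 0, (2 * w) • f (w ^ 2) = ∫ t in Ioi 0, f t := by
  rw [← integral_comp_rpow_Ioi_of_pos (g := f) two_pos]
  refine setIntegral_congr_fun measurableSet_Ioi fun w _ => ?_
  norm_num [rpow_two]

lemma image_sub_div_Ioi (hb : 0 < b) : (fun v : ℝ => v - b / v) '' Ioi 0 = univ := by
  refine eq_univ_of_forall fun u => ?_
  -- the positive root of `v ^ 2 - u * v - b`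
  set w := √(u ^ 2 + 4 * b)
  have hw : w ^ 2 = u ^ 2 + 4 * b := sq_sqrt (by positivity)
  have hu : |u| < w := by
    rw [← sqrt_sq_eq_abs]; exact sqrt_lt_sqrt (sq_nonneg u) (by linarith)
  have hv : 0 < (u + w) / 2 := by linarith [neg_abs_le u]
  refine ⟨(u + w) / 2, hv, ?_⟩
  field_simp [show u + w ≠ 0 by linarith]
  linear_combination hw

lemma strictMonoOn_sub_div (hb : 0 ≤ b) : StrictMonoOn (fun v : ℝ => v - b / v) (Ioi 0) :=
  fun x hx _ _ hxy => by
    simp only; linarith [div_le_div_of_nonneg_left hb hx hxy.le]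

lemma hasDerivAt_sub_div {v : ℝ} (hv : v ≠ 0) :
    HasDerivAt (fun v : ℝ => v - b / v) (1 + b / v ^ 2) v :=
  ((hasDerivAt_id v).sub (hasDerivAt_const_div_id hv)).congr_deriv (sub_neg_eq_add _ _)

lemma abs_one_add_div_sq (hb : 0 ≤ b) (v : ℝ) : |1 + b / v ^ 2| = 1 + b / v ^ 2 :=
  abs_of_nonneg (by positivity)

theorem integral_Ioi_one_add_div_sq_smul_comp_sub_div (hb : 0 < b) (g : ℝ → E) :
    ∫ v in Ioi 0, (1 + b / v ^ 2) • g (v - b / v) = ∫ u, g u := by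
  conv_rhs => rw [← setIntegral_univ, ← image_sub_div_Ioi hb]
  rw [integral_image_eq_integral_abs_deriv_smul measurableSet_Ioi
      (fun v hv => (hasDerivAt_sub_div (ne_of_gt hv)).hasDerivWithinAt)
      (strictMonoOn_sub_div hb.le).injOn]
  simp only [abs_one_add_div_sq hb.le]

lemma integrableOn_one_add_div_sq_smul_comp_sub_div {g : ℝ → E} (hg : Integrable g)
    (hb : 0 < b) : IntegrableOn (fun v => (1 + b / v ^ 2) • g (v - b / v)) (Ioi 0) := by
  have := (integrableOn_image_iff_integrableOn_abs_deriv_smul measurableSet_Ioi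
    (fun v hv => (hasDerivAt_sub_div (ne_of_gt hv)).hasDerivWithinAt)
    (strictMonoOn_sub_div hb.le).injOn g).mp
    (by rw [image_sub_div_Ioi hb]; exact hg.integrableOn)
  simpa only [abs_one_add_div_sq hb.le] using this

/-- The Cauchy–Schlömilch transformation. -/
theorem integral_Ioi_comp_sub_div {g : ℝ → E} (hg_even : ∀ u, g (-u) = g u)
    (hg : Integrable g) (hb : 0 < b) :
    ∫ v in Ioi 0, g (v - b / v) = (2 : ℝ)⁻¹ • ∫ u, g u := by
  have hweighted_int := integrableOn_one_add_div_sq_smul_comp_sub_div hg hb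
  have hint : IntegrableOn (fun v => g (v - b / v)) (Ioi 0) := by
    refine IntegrableOn.congr_fun (hweighted_int.bdd_smul 1 (φ := fun v => v ^ 2 / (v ^ 2 + b))
      (Continuous.aestronglyMeasurable (by fun_prop (disch := intros; positivity))) ?_)
      (fun v hv => ?_) measurableSet_Ioi
    · refine Filter.Eventually.of_forall fun v => ?_
      rw [norm_of_nonneg (by positivity)]
      exact div_le_one_of_le₀ (by linarith) (by positivity)
    · have : (0 : ℝ) < v := hv
      simp only [Pi.smul_apply', smul_smul]
      rw [show v ^ 2 / (v ^ 2 + b) * (1 + b / v ^ 2) = 1 by field_simp, one_smul]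
  have hint' : IntegrableOn (fun v => (b / v ^ 2) • g (v - b / v)) (Ioi 0) :=
    IntegrableOn.congr_fun (hweighted_int.sub hint)
      (fun v _ => by simp only [Pi.sub_apply, add_smul, one_smul, add_sub_cancel_left])
      measurableSet_Ioi
  -- `v ↦ b / v` maps `v - b / v` to its negative
  have hflip : ∫ v in Ioi 0, (b / v ^ 2) • g (v - b / v) = ∫ v in Ioi 0, g (v - b / v) := by
    rw [← integral_Ioi_comp_const_div hb (fun v => g (v - b / v))]
    refine setIntegral_congr_fun measurableSet_Ioi fun v _ => ?_
    rw [div_div_cancel₀ hb.ne', ← hg_even, neg_sub]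
  have htwice : ∫ u, g u = (2 : ℝ) • ∫ v in Ioi 0, g (v - b / v) := by
    rw [← integral_Ioi_one_add_div_sq_smul_comp_sub_div hb]
    simp only [add_smul, one_smul]
    rw [integral_add hint hint', hflip, two_smul]
  rw [htwice, smul_smul, inv_mul_cancel₀ two_ne_zero, one_smul]

end Substitution

lemma integral_gaussian_half : ∫ u : ℝ, exp (-u ^ 2 / 2) = √(2 * π) := by
  simpa [neg_div, div_eq_inv_mul] using integral_gaussian (1 / 2)

lemma integrable_gaussian_half : Integrable fun u : ℝ => exp (-u ^ 2 / 2) := by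
  simpa [neg_div, div_eq_inv_mul] using integrable_exp_neg_mul_sq (b := 1 / 2) (by norm_num)

theorem integral_Ioi_exp_neg_sq_div_two_sub {b : ℝ} (hb : 0 < b) :
    ∫ v in Ioi 0, exp (-v ^ 2 / 2 - b ^ 2 / (2 * v ^ 2)) = √(2 * π) / 2 * exp (-b) := by
  have hsquare : ∀ v ∈ Ioi (0 : ℝ),
      exp (-v ^ 2 / 2 - b ^ 2 / (2 * v ^ 2)) = exp (-b) * exp (-(v - b / v) ^ 2 / 2) := by
    intro v hv
    have : (0 : ℝ) < v := hv
    rw [← exp_add]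
    congr 1
    field_simp
    ring
  rw [setIntegral_congr_fun measurableSet_Ioi hsquare, integral_const_mul,
    integral_Ioi_comp_sub_div (g := fun u => exp (-u ^ 2 / 2)) (by simp)
      integrable_gaussian_half hb,
    integral_gaussian_half, smul_eq_mul]
  ring

/-- The density of the first time a standard Brownian motion reaches level `a`. -/
noncomputable def levyDensity (a t : ℝ) : ℝ :=
  a / (√(2 * π) * t ^ ((3 : ℝ) / 2)) * exp (-a ^ 2 / (2 * t))

lemma levyDensity_nonneg {a t : ℝ} (ha : 0 ≤ a) (ht : 0 ≤ t) : 0 ≤ levyDensity a t := by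
  unfold levyDensity; positivity

lemma sq_rpow_three_halves {x : ℝ} (hx : 0 ≤ x) : (x ^ 2) ^ ((3 : ℝ) / 2) = x ^ 3 := by
  rw [← rpow_natCast x 2, ← rpow_mul hx]
  norm_num

theorem integral_exp_mul_levyDensity {s a : ℝ} (hs : 0 < s) (ha : 0 < a) :
    ∫ t in Ioi 0, exp (-s * t) * levyDensity a t = exp (-(a * √(2 * s))) := by
  have hb : (a * √(2 * s)) ^ 2 = 2 * s * a ^ 2 := by
    rw [mul_pow, sq_sqrt (by positivity)]; ring
  have hsubst : ∀ v ∈ Ioi (0 : ℝ),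
      (a / v ^ 2) • (2 * (a / v)) • (exp (-s * (a / v) ^ 2) * levyDensity a ((a / v) ^ 2))
        = 2 / √(2 * π) * exp (-v ^ 2 / 2 - (a * √(2 * s)) ^ 2 / (2 * v ^ 2)) := by
    intro v hv
    have : (0 : ℝ) < v := hv
    have hexp : -v ^ 2 / 2 - 2 * s * a ^ 2 / (2 * v ^ 2)
        = -s * (a / v) ^ 2 + -a ^ 2 / (2 * (a / v) ^ 2) := by
      field_simp
      ring
    rw [levyDensity, sq_rpow_three_halves (div_pos ha this).le, hb, hexp, exp_add,
      smul_eq_mul, smul_eq_mul]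
    field_simp
  rw [← integral_Ioi_comp_sq, ← integral_Ioi_comp_const_div ha,
    setIntegral_congr_fun measurableSet_Ioi hsubst, integral_const_mul,
    integral_Ioi_exp_neg_sq_div_two_sub (by positivity)]
  field_simp

lemma integrableOn_exp_mul_levyDensity {s a : ℝ} (hs : 0 < s) (ha : 0 < a) :
    IntegrableOn (fun t => exp (-s * t) * levyDensity a t) (Ioi 0) :=
  .of_integral_ne_zero (by rw [integral_exp_mul_levyDensity hs ha]; positivity)

lemma hasSum_succ_mul_geometric {𝕜 : Type*} [NormedDivisionRing 𝕜] {r : 𝕜}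
    (hr : ‖r‖ < 1) :
    HasSum (fun n : ℕ => ((n : 𝕜) + 1) * r ^ n) (1 / (1 - r) ^ 2) := by
  simpa using hasSum_choose_mul_geometric_of_norm_lt_one 1 hr

lemma one_div_cosh_sq (u : ℝ) :
    1 / cosh u ^ 2 = 4 * exp (-(2 * u)) / (1 + exp (-(2 * u))) ^ 2 := by
  rw [cosh_eq, show -(2 * u) = -u + -u by ring, exp_add, exp_neg]
  field_simp
  ring

lemma coverDensity_eq_tsum (t : ℝ) :
    coverDensity t = ∑' n : ℕ, 4 * (-1) ^ n * ((n : ℝ) + 1) * levyDensity (n + 1) t := by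
  unfold coverDensity levyDensity
  exact tsum_congr fun n => by ring

lemma norm_exp_neg_sqrt_lt_one {s : ℝ} (hs : 0 < s) : ‖exp (-√(2 * s))‖ < 1 := by
  rw [norm_of_nonneg (exp_pos _).le, exp_lt_one_iff, neg_lt_zero]
  positivity

lemma integral_exp_mul_levyDensity_succ {s : ℝ} (hs : 0 < s) (n : ℕ) :
    ∫ t in Ioi 0, exp (-s * t) * levyDensity (n + 1) t
      = exp (-√(2 * s)) * exp (-√(2 * s)) ^ n := by
  rw [integral_exp_mul_levyDensity hs (by positivity), ← pow_succ', ← exp_nat_mul]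
  push_cast
  ring_nf

theorem hasSum_integral_exp_mul_coverDensity {s : ℝ} (hs : 0 < s) :
    HasSum (fun n : ℕ => ∫ t in Ioi 0,
        4 * (-1) ^ n * ((n : ℝ) + 1) * (exp (-s * t) * levyDensity (n + 1) t))
      (∫ t in Ioi 0, exp (-s * t) * coverDensity t) := by
  set x := exp (-√(2 * s))
  have hnorm : ∀ n : ℕ, ∫ t in Ioi 0,
      ‖4 * (-1) ^ n * ((n : ℝ) + 1) * (exp (-s * t) * levyDensity (n + 1) t)‖
        = 4 * x * (((n : ℝ) + 1) * x ^ n) := fun n => by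
    have hterm : ∀ t ∈ Ioi (0 : ℝ),
        ‖4 * (-1) ^ n * ((n : ℝ) + 1) * (exp (-s * t) * levyDensity (n + 1) t)‖
          = 4 * ((n : ℝ) + 1) * (exp (-s * t) * levyDensity (n + 1) t) := fun t ht => by
      have hG := mul_nonneg (exp_pos (-s * t)).le
        (levyDensity_nonneg (a := n + 1) (by positivity) (le_of_lt ht))
      rw [norm_mul, norm_of_nonneg hG]
      norm_num [abs_of_nonneg (by positivity : (0 : ℝ) ≤ n + 1)]
    rw [setIntegral_congr_fun measurableSet_Ioi hterm, integral_const_mul,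
      integral_exp_mul_levyDensity_succ hs]
    ring
  have hswap := hasSum_integral_of_summable_integral_norm
    (F := fun (n : ℕ) t =>
      4 * (-1) ^ n * ((n : ℝ) + 1) * (exp (-s * t) * levyDensity (n + 1) t))
    (fun n => (integrableOn_exp_mul_levyDensity hs (by positivity)).const_mul _)
    (by simp only [hnorm]
        exact (hasSum_succ_mul_geometric (norm_exp_neg_sqrt_lt_one hs)).summable.mul_left _)
  have hdensity : ∀ t, exp (-s * t) * coverDensity t = ∑' n : ℕ,
      4 * (-1) ^ n * ((n : ℝ) + 1) * (exp (-s * t) * levyDensity (n + 1) t) := fun t => by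
    rw [coverDensity_eq_tsum, ← tsum_mul_left]
    exact tsum_congr fun n => by ring
  simpa only [hdensity] using hswap

/-- The function `p t = ∑_{n≥0} 4 (-1)^n (n+1)² / (√(2π) t^{3/2}) exp (-(n+1)²/(2t))` has
Laplace transform `∫_0^∞ e^{-st} p t dt = 1 / cosh² √(s/2)` for all `s > 0`. -/
theorem stmt_12 (s : ℝ) (hs : 0 < s) :
    ∫ t in Set.Ioi (0 : ℝ), Real.exp (-s * t) * coverDensity t
      = 1 / (Real.cosh (Real.sqrt (s / 2))) ^ 2 := by
  set x := exp (-√(2 * s))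
  have hterms : HasSum (fun n : ℕ => ∫ t in Ioi 0,
      4 * (-1) ^ n * ((n : ℝ) + 1) * (exp (-s * t) * levyDensity (n + 1) t))
        (4 * x * (1 / (1 - -x) ^ 2)) := by
    have hx : ‖-x‖ < 1 := by rw [norm_neg]; exact norm_exp_neg_sqrt_lt_one hs
    refine ((hasSum_succ_mul_geometric hx).mul_left (4 * x)).congr_fun fun n => ?_
    rw [integral_const_mul, integral_exp_mul_levyDensity_succ hs, neg_pow]
    ring
  have hsqrt : √(2 * s) = 2 * √(s / 2) := by
    rw [show 2 * s = 2 ^ 2 * (s / 2) by ring, sqrt_mul (by positivity), sqrt_sq zero_le_two]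
  rw [(hasSum_integral_exp_mul_coverDensity hs).unique hterms, one_div_cosh_sq, ← hsqrt]
  ring
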